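/- For a nonzero integer vector (α_1,…,α_n, β_1,…,β_n) ∈ Z^{2n}, the associated binomial B = x_1^{α_1^+}⋯x_n^{α_n^+} y_1^{β_1^+}⋯y_n^{β_n^+} − x_1^{α_1^−}⋯x_n^{α_n^−} y_1^{β_1^−}⋯y_n^{β_n^−} vanishes identically on V (i.e., B(φ(u)) = 0 for all u ∈ K^n) if and only if α_i d_i + β_i f_i + β_n h_i = 0 for all i = 1,…,n−1 and α_n + Σ_{i=1}^{n−1} β_i g_i = 0. -/
import Mathlib

open MvPolynomial

/-- The parametrization map `φ : K^n → K^{2n}` of the toric variety `V`. -/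
noncomputable def phiMap {K : Type*} [Field K] (n : ℕ)
    (d f g h : Fin (n - 1) → ℕ) (u : Fin n → K) : Fin n ⊕ Fin n → K :=
  Sum.elim
    (fun i => if hi : i.1 < n - 1 then u i ^ d ⟨i.1, hi⟩ else u i)
    (fun i =>
      if hi : i.1 < n - 1 then
        u i ^ f ⟨i.1, hi⟩ * u ⟨n - 1, by have := i.isLt; omega⟩ ^ g ⟨i.1, hi⟩
      else ∏ j : Fin (n - 1), u (Fin.castLE (by omega) j) ^ h j)

/-- The binomial `B = ∏ x_i^{α_i⁺} ∏ y_i^{β_i⁺} - ∏ x_i^{α_i⁻} ∏ y_i^{β_i⁻}`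
associated with an integer vector `(α, β) ∈ ℤ^{2n}`. -/
noncomputable def Bpoly (K : Type*) [Field K] (n : ℕ) (α β : Fin n → ℤ) :
    MvPolynomial (Fin n ⊕ Fin n) K :=
  (∏ i : Fin n, X (Sum.inl i) ^ (α i).toNat)
      * (∏ i : Fin n, X (Sum.inr i) ^ (β i).toNat)
    - (∏ i : Fin n, X (Sum.inl i) ^ (-(α i)).toNat)
      * (∏ i : Fin n, X (Sum.inr i) ^ (-(β i)).toNat)

/-- exponent vector of the monomial obtained by substituting `φ(u)` into
`∏ x_i^{a_i} ∏ y_i^{b_i}`. -/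
def Eexp (m : ℕ) (d f g h : Fin m → ℕ) (a b : Fin (m + 1) → ℕ) (i : Fin (m + 1)) : ℕ :=
  if hi : i.1 < m then
    d ⟨i.1, hi⟩ * a i + f ⟨i.1, hi⟩ * b i + h ⟨i.1, hi⟩ * b (Fin.last m)
  else a i + ∑ j : Fin m, g j * b j.castSucc

lemma Eexp_castSucc (m : ℕ) (d f g h : Fin m → ℕ) (a b : Fin (m + 1) → ℕ) (j : Fin m) :
    Eexp m d f g h a b j.castSucc
      = d j * a j.castSucc + f j * b j.castSucc + h j * b (Fin.last m) := by
  simp [Eexp, j.isLt]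

lemma Eexp_last (m : ℕ) (d f g h : Fin m → ℕ) (a b : Fin (m + 1) → ℕ) :
    Eexp m d f g h a b (Fin.last m)
      = a (Fin.last m) + ∑ j : Fin m, g j * b j.castSucc := by
  simp [Eexp]

lemma phi_prod_eq {K : Type*} [Field K] (m : ℕ) (d f g h : Fin m → ℕ)
    (u : Fin (m + 1) → K) (a b : Fin (m + 1) → ℕ) :
    (∏ i : Fin (m + 1), phiMap (m + 1) d f g h u (Sum.inl i) ^ a i)
      * (∏ i : Fin (m + 1), phiMap (m + 1) d f g h u (Sum.inr i) ^ b i)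
      = ∏ i : Fin (m + 1), u i ^ Eexp m d f g h a b i := by
  have hcast : ∀ j : Fin m, Fin.castLE (by omega : m ≤ m + 1) j = j.castSucc := fun j => rfl
  simp only [phiMap, Sum.elim_inl, Sum.elim_inr, Nat.add_sub_cancel,
    show (⟨m, by omega⟩ : Fin (m+1)) = Fin.last m from rfl]
  rw [Fin.prod_univ_castSucc
      (f := fun i => (if hi : i.1 < m then u i ^ d ⟨i.1, hi⟩ else u i) ^ a i),
    Fin.prod_univ_castSucc, Fin.prod_univ_castSucc (f := fun i => u i ^ Eexp m d f g h a b i)]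
  simp only [Fin.coe_castSucc, Fin.is_lt, dif_pos, Fin.eta, Fin.val_last, lt_irrefl,
    dif_neg, not_false_iff, Eexp_castSucc, Eexp_last]
  have h1 : ∀ j : Fin m, u (Fin.castLE (by omega : m ≤ m + 1) j) = u j.castSucc := fun j => rfl
  simp only [h1]
  have h3 : (∏ x : Fin (m + 1 - 1), u x.castSucc ^ h x) = ∏ x : Fin m, u x.castSucc ^ h x := rfl
  rw [h3]
  simp only [pow_add, ← Finset.prod_pow_eq_pow_sum, pow_mul, mul_pow,
    Finset.prod_mul_distrib, ← Finset.prod_pow]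
  ring

lemma prod_pow_eq_iff {K : Type*} [Field K] [Infinite K] {N : ℕ} (A B : Fin N → ℕ)
    (hu : ∀ u : Fin N → K, (∏ i, u i ^ A i) = ∏ i, u i ^ B i) : A = B := by
  funext i
  have h1 : ∀ (C : Fin N → ℕ) (t : K), (∏ j, (if j = i then t else 1) ^ C j) = t ^ C i := by
    intro C t
    rw [Finset.prod_eq_single i (fun b _ hb => by simp [hb]) (by simp)]
    simp
  have key : ∀ t : K, t ^ A i = t ^ B i := by
    intro t
    have := hu (fun j => if j = i then t else 1)
    simpa [h1] using this
  have hpoly : (Polynomial.X ^ A i : Polynomial K) = Polynomial.X ^ B i :=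
    Polynomial.funext fun t => by simpa using key t
  have := congrArg Polynomial.natDegree hpoly
  simpa [Polynomial.natDegree_X_pow] using this

/-- For a nonzero integer vector `(α, β) ∈ ℤ^{2n}`, the associated binomial
vanishes identically on `V` iff `α_i d_i + β_i f_i + β_n h_i = 0` for all
`i = 1, …, n-1` and `α_n + ∑ β_i g_i = 0`. -/
theorem toric_binomial_vanishes_iff_relation
    (K : Type*) [Field K] [IsAlgClosed K]
    (n : ℕ) (hn : 3 ≤ n)
    (d f g h : Fin (n - 1) → ℕ)
    (hd : ∀ i, 0 < d i) (hf : ∀ i, 0 < f i) (hg : ∀ i, 0 < g i) (hh : ∀ i, 0 < h i)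
    (hdf : ∀ i, Nat.Coprime (d i) (f i))
    (hdh : ∀ i, Nat.Coprime (d i) (h i))
    (hdd : ∀ i j, i ≠ j → Nat.Coprime (d i) (d j))
    (α β : Fin n → ℤ) (hne : ¬ (α = 0 ∧ β = 0)) :
    (∀ u : Fin n → K,
        MvPolynomial.eval (phiMap n d f g h u) (Bpoly K n α β) = 0)
      ↔ ((∀ i : Fin (n - 1),
            α (Fin.castLE (by omega) i) * d i + β (Fin.castLE (by omega) i) * f i
              + β ⟨n - 1, by omega⟩ * h i = 0) ∧
          α ⟨n - 1, by omega⟩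
            + ∑ i : Fin (n - 1), β (Fin.castLE (by omega) i) * g i = 0) := by
  obtain ⟨m, rfl⟩ : ∃ m, n = m + 1 := ⟨n - 1, by omega⟩
  clear hne hd hf hg hh hdf hdh hdd
  set a1 : Fin (m + 1) → ℕ := fun i => (α i).toNat with ha1
  set b1 : Fin (m + 1) → ℕ := fun i => (β i).toNat with hb1
  set a2 : Fin (m + 1) → ℕ := fun i => (-(α i)).toNat with ha2
  set b2 : Fin (m + 1) → ℕ := fun i => (-(β i)).toNat with hb2
  have hA : ∀ i, (a1 i : ℤ) - (a2 i : ℤ) = α i := fun i => by simp [ha1, ha2]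
  have hB : ∀ i, (b1 i : ℤ) - (b2 i : ℤ) = β i := fun i => by simp [hb1, hb2]
  have key : ∀ u : Fin (m + 1) → K,
      MvPolynomial.eval (phiMap (m + 1) d f g h u) (Bpoly K (m + 1) α β)
        = (∏ i, u i ^ Eexp m d f g h a1 b1 i) - (∏ i, u i ^ Eexp m d f g h a2 b2 i) := by
    intro u
    simp only [Bpoly, map_sub, map_mul, map_prod, map_pow, eval_X]
    rw [phi_prod_eq, phi_prod_eq]
  have hlast : (⟨m + 1 - 1, by omega⟩ : Fin (m + 1)) = Fin.last m := rfl
  have hcast : ∀ j : Fin m, Fin.castLE (by omega : m + 1 - 1 ≤ m + 1) j = j.castSucc :=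
    fun j => rfl
  have hsum : (∑ x : Fin (m + 1 - 1), β x.castSucc * (g x : ℤ))
      = ∑ x : Fin m, β x.castSucc * (g x : ℤ) := rfl
  constructor
  · intro hvan
    have hE : Eexp m d f g h a1 b1 = Eexp m d f g h a2 b2 := by
      apply prod_pow_eq_iff (K := K)
      intro u
      have := key u
      rw [hvan u] at this
      linear_combination -this
    constructor
    · intro j
      have := congrFun hE j.castSucc
      rw [Eexp_castSucc, Eexp_castSucc] at this
      have hz : (d j : ℤ) * a1 j.castSucc + f j * b1 j.castSucc + h j * b1 (Fin.last m)
          = (d j : ℤ) * a2 j.castSucc + f j * b2 j.castSucc + h j * b2 (Fin.last m) := by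
        exact_mod_cast this
      rw [hcast j, hlast]
      linear_combination hz - (d j : ℤ) * hA j.castSucc - (f j : ℤ) * hB j.castSucc
        - (h j : ℤ) * hB (Fin.last m)
    · have := congrFun hE (Fin.last m)
      rw [Eexp_last, Eexp_last] at this
      have hz : (a1 (Fin.last m) : ℤ) + ∑ j : Fin m, (g j : ℤ) * b1 j.castSucc
          = (a2 (Fin.last m) : ℤ) + ∑ j : Fin m, (g j : ℤ) * b2 j.castSucc := by
        exact_mod_cast this
      rw [hlast]
      simp only [hcast]
      rw [hsum]
      have hs : ∑ j : Fin m, (β j.castSucc) * g j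
          = ∑ j : Fin m, (g j : ℤ) * b1 j.castSucc - ∑ j : Fin m, (g j : ℤ) * b2 j.castSucc := by
        rw [← Finset.sum_sub_distrib]
        exact Finset.sum_congr rfl fun j _ => by linear_combination (g j : ℤ) * (hB j.castSucc).symm
      rw [hs]
      linear_combination hz - hA (Fin.last m)
  · rintro ⟨h1, h2⟩
    intro u
    rw [key u, sub_eq_zero]
    congr 1
    funext i
    congr 1
    refine Fin.lastCases ?_ ?_ i
    · rw [Eexp_last, Eexp_last]
      rw [hlast] at h2
      simp only [hcast] at h2
      rw [hsum] at h2
      have hs : ∑ j : Fin m, (g j : ℤ) * b1 j.castSucc - ∑ j : Fin m, (g j : ℤ) * b2 j.castSucc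
          = ∑ j : Fin m, (β j.castSucc) * g j := by
        rw [← Finset.sum_sub_distrib]
        exact Finset.sum_congr rfl fun j _ => by linear_combination (g j : ℤ) * (hB j.castSucc)
      have : (a1 (Fin.last m) : ℤ) + ∑ j : Fin m, (g j : ℤ) * b1 j.castSucc
          = (a2 (Fin.last m) : ℤ) + ∑ j : Fin m, (g j : ℤ) * b2 j.castSucc := by
        linear_combination h2 + hA (Fin.last m) + hs
      exact_mod_cast this
    · intro j
      rw [Eexp_castSucc, Eexp_castSucc]
      have h1j := h1 j
      rw [hcast j, hlast] at h1j
      have : (d j : ℤ) * a1 j.castSucc + f j * b1 j.castSucc + h j * b1 (Fin.last m)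
          = (d j : ℤ) * a2 j.castSucc + f j * b2 j.castSucc + h j * b2 (Fin.last m) := by
        linear_combination h1j + (d j : ℤ) * hA j.castSucc + (f j : ℤ) * hB j.castSucc
          + (h j : ℤ) * hB (Fin.last m)
      exact_mod_cast this
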